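/- Let K be a commutative field, a, b ∈ K, c ∈ K \ {0}, and define the affine transformation T_{a,b,c} : K² → K² by T_{a,b,c}(x₁,x₂) = (a + c·x₁, b + 3ac·x₁ + c²·x₂), which describes the action of the matrix M_{a,b,c} on the affine points P(x₁,x₂) of the Cayley surface. Then for all (u₁,u₂), (v₁,v₂) ∈ K²: u₁ = v₁ if and only if the first coordinates of T_{a,b,c}(u₁,u₂) and T_{a,b,c}(v₁,v₂) agree; and if u₁ ≠ v₁, then δ(T_{a,b,c}(u₁,u₂), T_{a,b,c}(v₁,v₂)) = δ((u₁,u₂),(v₁,v₂)). That is, the group G(F) acts on the affine part of the Cayley surface as a group of isometries of the distance function δ. -/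
import Mathlib

/-- The (non-symmetric) distance function on the affine part of the Cayley
surface, in the parameters `(u₁,u₂)`. -/
def cayleyDist {K : Type*} [Field K] (A B : K × K) : K :=
  (2*A.1^2 - A.2 - A.1*B.1 + B.2 - B.1^2) / (A.1 - B.1)^2

/-- The action of the matrix `M_{a,b,c}` on the affine part of the Cayley
surface, in the parameters `(x₁,x₂)`. -/
def cayleyT {K : Type*} [Field K] (a b c : K) (x : K × K) : K × K :=
  (a + c * x.1, b + 3*a*c*x.1 + c^2*x.2)

theorem stmt_17 {K : Type*} [Field K] (a b c : K) (hc : c ≠ 0)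
    (u v : K × K) :
    (u.1 = v.1 ↔ (cayleyT a b c u).1 = (cayleyT a b c v).1) ∧
    (u.1 ≠ v.1 →
      cayleyDist (cayleyT a b c u) (cayleyT a b c v) = cayleyDist u v) := by
  constructor
  · constructor
    · intro h; simp [cayleyT, h]
    · intro h
      simp only [cayleyT] at h
      have : c * u.1 = c * v.1 := by exact add_left_cancel h
      exact mul_left_cancel₀ hc this
  · intro h
    have hsub : u.1 - v.1 ≠ 0 := sub_ne_zero.mpr h
    have hT : (a + c * u.1) - (a + c * v.1) = c * (u.1 - v.1) := by ring
    simp only [cayleyDist, cayleyT]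
    rw [div_eq_div_iff ?h1 (pow_ne_zero 2 hsub)]
    · ring
    · rw [hT]; exact pow_ne_zero 2 (mul_ne_zero hc hsub)
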